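/- arXiv:2405.07314 — 3 statements merged into one kernel-verified Lean document; each statement's English description precedes it below -/
import Mathlib

section
/- Fix a negative token v' ≠ y and regard its hard-negative weight as a function of the temperature, W(t) = exp(p(v')/t) / Σ_{u ∈ V, u ≠ y} exp(p(u)/t) for t > 0. Then at every τ > 0, W is differentiable with derivative W'(τ) = (W(τ)/τ²) · ( Σ_{u ≠ y} w(u)·p(u) − p(v') ), where w(u) = exp(p(u)/τ) / Σ_{u' ≠ y} exp(p(u')/τ) are the hard-negative weights at temperature τ. -/
open Real Finset

theorem Real.hasDerivAt_exp_div (a : ℝ) {τ : ℝ} (hτ : τ ≠ 0) :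
    HasDerivAt (fun t : ℝ => exp (a / t)) (exp (a / τ) * (-a / τ ^ 2)) τ := by
  have h : HasDerivAt (fun t : ℝ => a / t) (-a / τ ^ 2) τ := by
    simpa [div_eq_mul_inv, neg_div] using (hasDerivAt_inv hτ).const_mul a
  exact h.exp

theorem hasDerivAt_exp_div_sum_exp {ι : Type*} {s : Finset ι} (hs : s.Nonempty)
    (p : ι → ℝ) (a : ℝ) {τ : ℝ} (hτ : τ ≠ 0) :
    HasDerivAt (fun t : ℝ => exp (a / t) / ∑ u ∈ s, exp (p u / t))
      (exp (a / τ) / (∑ u ∈ s, exp (p u / τ)) / τ ^ 2 *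
        ((∑ u ∈ s, exp (p u / τ) / (∑ u' ∈ s, exp (p u' / τ)) * p u) - a)) τ := by
  set S := ∑ u ∈ s, exp (p u / τ)
  have hS : S ≠ 0 := (sum_pos (fun u _ => exp_pos _) hs).ne'
  have hsum : HasDerivAt (fun t : ℝ => ∑ u ∈ s, exp (p u / t))
      (∑ u ∈ s, exp (p u / τ) * (-p u / τ ^ 2)) τ :=
    HasDerivAt.fun_sum fun u _ => hasDerivAt_exp_div (p u) hτ
  refine ((hasDerivAt_exp_div a hτ).div hsum hS).congr_deriv ?_
  have hmean : ∑ u ∈ s, exp (p u / τ) / S * p u = (∑ u ∈ s, exp (p u / τ) * p u) / S := by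
    simp only [sum_div, div_mul_eq_mul_div]
  have hsum_deriv : ∑ u ∈ s, exp (p u / τ) * (-p u / τ ^ 2)
      = -(∑ u ∈ s, exp (p u / τ) * p u) / τ ^ 2 := by
    simp only [neg_div, mul_neg, sum_neg_distrib, sum_div, mul_div_assoc]
  rw [hmean, hsum_deriv]
  field_simp
  ring

theorem hard_negative_weight_hasDerivAt_general
    {V : Type*} [Fintype V] [DecidableEq V]
    (p : V → ℝ) (y : V) (τ : ℝ) (hτ : 0 < τ) (v' : V) (hv' : v' ≠ y) :
    HasDerivAt
      (fun t : ℝ =>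
        Real.exp (p v' / t) / (∑ u ∈ Finset.univ.filter (· ≠ y), Real.exp (p u / t)))
      ((Real.exp (p v' / τ) / (∑ u ∈ Finset.univ.filter (· ≠ y), Real.exp (p u / τ))) / τ ^ 2 *
        ((∑ u ∈ Finset.univ.filter (· ≠ y),
            (Real.exp (p u / τ) /
              (∑ u' ∈ Finset.univ.filter (· ≠ y), Real.exp (p u' / τ))) * p u) - p v'))
      τ :=
  hasDerivAt_exp_div_sum_exp ⟨v', by simpa using hv'⟩ p (p v') hτ.ne'

/-- The hard-negative weight of a fixed negative token `v' ≠ y`, viewed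
as a function of the temperature `t`, `W t = exp(p v' / t) / ∑_{u ≠ y} exp(p u / t)`,
is differentiable at every `τ > 0` with derivative
`W τ / τ² * (∑_{u ≠ y} w u * p u − p v')`, where
`w u = exp(p u / τ) / ∑_{u' ≠ y} exp(p u' / τ)`. -/
theorem hard_negative_weight_hasDerivAt
    {V : Type*} [Fintype V] [DecidableEq V] (hV : 1 < Fintype.card V)
    (p : V → ℝ) (y : V) (τ : ℝ) (hτ : 0 < τ) (v' : V) (hv' : v' ≠ y) :
    HasDerivAt
      (fun t : ℝ =>
        Real.exp (p v' / t) / (∑ u ∈ Finset.univ.filter (· ≠ y), Real.exp (p u / t)))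
      ((Real.exp (p v' / τ) / (∑ u ∈ Finset.univ.filter (· ≠ y), Real.exp (p u / τ))) / τ ^ 2 *
        ((∑ u ∈ Finset.univ.filter (· ≠ y),
            (Real.exp (p u / τ) /
              (∑ u' ∈ Finset.univ.filter (· ≠ y), Real.exp (p u' / τ))) * p u) - p v'))
      τ :=
  hard_negative_weight_hasDerivAt_general p y τ hτ v' hv'
end

section
/- Let f(θ) = −log( exp(p(θ,y)/τ) / Σ_{v ∈ V} exp(p(θ,v)/τ) ) be the per-token ranking-guided generation loss and g(θ) = τ · log( Σ_{v ≠ y} exp( (p(θ,v) − p(θ,y)) / τ ) ) + τ·ρ the KL-constrained DRO objective with parameter ρ ∈ ℝ. Then both are differentiable at θ₀ and the Fréchet derivative of f at θ₀ equals c • (Fréchet derivative of g at θ₀), where c = ( Σ_{v ≠ y} exp(p(θ₀,v)/τ) ) / ( τ · Σ_{v ∈ V} exp(p(θ₀,v)/τ) ) > 0; hence minimizing the ranking-guided generation loss is, up to a positive scalar factor of the gradient, a surrogate for minimizing the DRO objective L_DRO^{ρ,τ}. -/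
/-!
Write `T θ = ∑_{v ≠ y} exp ((p θ v - p θ y) / τ)`. Factoring `exp (p θ y / τ)` out of the
partition function turns the loss into `log (1 + T θ)`, while the DRO objective is
`τ * log (T θ) + τ * ρ`. Both are functions of the single scalar `T`, so the chain rule gives
derivatives `T'/(1 + T)` and `τ T'/T`, whose ratio `T / (τ (1 + T))` is the scalar `c`.
-/

open Real Finset

section SoftmaxAlgebra

variable {V : Type*} [Fintype V] [DecidableEq V]

theorem sum_filter_ne_exp_div_eq_exp_mul (a : V → ℝ) (y : V) (τ : ℝ) :
    ∑ v ∈ univ.filter (· ≠ y), exp (a v / τ) =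
      exp (a y / τ) * ∑ v ∈ univ.filter (· ≠ y), exp ((a v - a y) / τ) := by
  rw [mul_sum]
  refine sum_congr rfl fun v _ => ?_
  rw [← exp_add, sub_div, add_sub_cancel]

theorem sum_exp_div_eq_exp_mul_one_add (a : V → ℝ) (y : V) (τ : ℝ) :
    ∑ v, exp (a v / τ) =
      exp (a y / τ) * (1 + ∑ v ∈ univ.filter (· ≠ y), exp ((a v - a y) / τ)) := by
  rw [mul_one_add, ← sum_filter_ne_exp_div_eq_exp_mul, filter_ne']
  exact (add_sum_erase _ _ (mem_univ y)).symm

theorem neg_log_exp_div_sum_exp_eq_log_one_add (a : V → ℝ) (y : V) (τ : ℝ) :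
    -log (exp (a y / τ) / ∑ v, exp (a v / τ)) =
      log (1 + ∑ v ∈ univ.filter (· ≠ y), exp ((a v - a y) / τ)) := by
  rw [sum_exp_div_eq_exp_mul_one_add a y τ, div_mul_cancel_left₀ (exp_ne_zero _), log_inv,
    neg_neg]

theorem sum_filter_ne_exp_pos (hV : 1 < Fintype.card V) (b : V → ℝ) (y : V) :
    0 < ∑ v ∈ univ.filter (· ≠ y), exp (b v) := by
  obtain ⟨v, hv⟩ := Fintype.exists_ne_of_one_lt_card hV y
  exact sum_pos (fun _ _ => exp_pos _) ⟨v, by simpa using hv⟩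

end SoftmaxAlgebra

theorem fderiv_log_one_add_eq_smul_fderiv_mul_log_add {E : Type*} [NormedAddCommGroup E]
    [NormedSpace ℝ E] {T : E → ℝ} {x : E} (hT : DifferentiableAt ℝ T x) (h₀ : T x ≠ 0)
    (h₁ : 1 + T x ≠ 0) {τ : ℝ} (hτ : τ ≠ 0) (c : ℝ) :
    fderiv ℝ (fun θ => log (1 + T θ)) x =
      (T x / (τ * (1 + T x))) • fderiv ℝ (fun θ => τ * log (T θ) + c) x := by
  have hlog₁ := (hT.hasFDerivAt.const_add 1).log h₁
  have hlog := ((hT.hasFDerivAt.log h₀).const_mul τ).add_const c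
  rw [hlog₁.fderiv, hlog.fderiv, smul_smul, smul_smul]
  congr 1
  field_simp

/-- The ranking-guided generation loss
`f θ = −log( exp(p θ y / τ) / ∑_{v ∈ V} exp(p θ v / τ) )` and the KL-constrained DRO
objective `g θ = τ * log( ∑_{v ≠ y} exp( (p θ v − p θ y) / τ ) ) + τ * ρ` are both
differentiable at `θ₀`, the scalar
`c = ( ∑_{v ≠ y} exp(p θ₀ v / τ) ) / ( τ * ∑_{v ∈ V} exp(p θ₀ v / τ) )` is positive,
and the Fréchet derivative of `f` at `θ₀` equals `c` times that of `g`; hence `f` is,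
up to a positive scalar factor of the gradient, a surrogate for `g`. -/
theorem ranking_guided_loss_surrogate_of_dro
    {E : Type*} [NormedAddCommGroup E] [NormedSpace ℝ E]
    {V : Type*} [Fintype V] [DecidableEq V] (hV : 1 < Fintype.card V)
    (y : V) (τ : ℝ) (hτ : 0 < τ)
    (p : E → V → ℝ) (θ₀ : E) (D : V → E →L[ℝ] ℝ)
    (hD : ∀ v, HasFDerivAt (fun θ => p θ v) (D v) θ₀)
    (ρ : ℝ) :
    DifferentiableAt ℝ
        (fun θ => -Real.log (Real.exp (p θ y / τ) / ∑ v, Real.exp (p θ v / τ))) θ₀ ∧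
      DifferentiableAt ℝ
        (fun θ =>
          τ * Real.log (∑ v ∈ Finset.univ.filter (· ≠ y),
            Real.exp ((p θ v - p θ y) / τ)) + τ * ρ) θ₀ ∧
      0 < (∑ v ∈ Finset.univ.filter (· ≠ y), Real.exp (p θ₀ v / τ)) /
            (τ * ∑ v, Real.exp (p θ₀ v / τ)) ∧
      fderiv ℝ
          (fun θ => -Real.log (Real.exp (p θ y / τ) / ∑ v, Real.exp (p θ v / τ))) θ₀ =
        ((∑ v ∈ Finset.univ.filter (· ≠ y), Real.exp (p θ₀ v / τ)) /
            (τ * ∑ v, Real.exp (p θ₀ v / τ))) •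
          fderiv ℝ
            (fun θ =>
              τ * Real.log (∑ v ∈ Finset.univ.filter (· ≠ y),
                Real.exp ((p θ v - p θ y) / τ)) + τ * ρ) θ₀ := by
  simp_rw [neg_log_exp_div_sum_exp_eq_log_one_add (p _) y τ]
  rw [sum_filter_ne_exp_div_eq_exp_mul, sum_exp_div_eq_exp_mul_one_add, mul_left_comm τ,
    mul_div_mul_left _ _ (exp_ne_zero _)]
  have hp (v : V) : DifferentiableAt ℝ (fun θ => p θ v) θ₀ := (hD v).differentiableAt
  have hT : DifferentiableAt ℝ
      (fun θ => ∑ v ∈ univ.filter (· ≠ y), exp ((p θ v - p θ y) / τ)) θ₀ := by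
    fun_prop
  have hTpos := sum_filter_ne_exp_pos hV (fun v => (p θ₀ v - p θ₀ y) / τ) y
  exact ⟨(hT.const_add 1).log (by positivity), (hT.log hTpos.ne').const_mul τ |>.add_const _,
    by positivity,
    fderiv_log_one_add_eq_smul_fderiv_mul_log_add hT hTpos.ne' (by positivity) hτ.ne' _⟩
end

section
/- NDCG at cutoff K is determined by the discrete one-way partial AUC: NDCG@K = 𝕀( OPAUC_K > 0 ) / log₂( (K − 1)·(1 − OPAUC_K) + 2 ). -/
open Finset

/-- With a single positive item `i⋆`, injective scores `s`, rank
`r = 1 + |{v ≠ i⋆ : s v > s i⋆}|`, and `T` the set of the `K − 1` highest-scoring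
negatives, NDCG@K (which is `1 / log₂(r + 1)` if `r < K` and `0` otherwise) is
determined by the discrete one-way partial AUC
`OPAUC_K = |{v ∈ T : s v < s i⋆}| / (K − 1)` via
`NDCG@K = 𝕀(OPAUC_K > 0) / log₂( (K − 1) * (1 − OPAUC_K) + 2 )`. -/
theorem ndcg_from_opauc
    {V : Type*} [Fintype V] [DecidableEq V]
    (istar : V) (s : V → ℝ) (hs : Function.Injective s)
    (K : ℕ) (hK1 : 1 < K) (hK2 : K ≤ Fintype.card V)
    (T : Finset V)
    (hTneg : ∀ v ∈ T, v ≠ istar)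
    (hTcard : T.card = K - 1)
    (hTtop : ∀ v ∈ T, ∀ u, u ≠ istar → u ∉ T → s u < s v) :
    (if 1 + (Finset.univ.filter (fun v => v ≠ istar ∧ s istar < s v)).card < K then
        1 / Real.logb 2
          (((1 + (Finset.univ.filter (fun v => v ≠ istar ∧ s istar < s v)).card : ℕ) : ℝ) + 1)
      else 0) =
      (if 0 < ((T.filter (fun v => s v < s istar)).card : ℝ) / ((K : ℝ) - 1) then (1 : ℝ)
        else 0) /
        Real.logb 2
          (((K : ℝ) - 1) *
              (1 - ((T.filter (fun v => s v < s istar)).card : ℝ) / ((K : ℝ) - 1)) + 2) := by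
  have hKpos : (0:ℝ) < (K:ℝ) - 1 := by
    have : (1:ℝ) < K := by exact_mod_cast hK1
    linarith
  have hne : ∀ v ∈ T, s v ≠ s istar := fun v hv h => hTneg v hv (hs h)
  set A := Finset.univ.filter (fun v => v ≠ istar ∧ s istar < s v) with hA
  set B := T.filter (fun v => s v < s istar) with hB
  have hmle : B.card ≤ K - 1 := hTcard ▸ Finset.card_filter_le T _
  by_cases hm : B.Nonempty
  · -- positive item ranks within top K
    have hmpos : 0 < B.card := Finset.card_pos.mpr hm
    -- A equals the elements of T above istar
    have hAeq : A = T.filter (fun v => s istar < s v) := by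
      ext v
      simp only [hA, Finset.mem_filter, Finset.mem_univ, true_and]
      constructor
      · rintro ⟨hv, hlt⟩
        refine ⟨?_, hlt⟩
        by_contra hvT
        obtain ⟨w, hw⟩ := hm
        have hwT := Finset.mem_filter.mp hw
        have := hTtop w hwT.1 v hv hvT
        linarith [hwT.2]
      · rintro ⟨hvT, hlt⟩
        exact ⟨hTneg v hvT, hlt⟩
    have hsum : B.card + (T.filter (fun v => s istar < s v)).card = K - 1 := by
      rw [← hTcard, hB]
      rw [show T.filter (fun v => s istar < s v) = T.filter (fun v => ¬ s v < s istar) from ?_]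
      · exact Finset.card_filter_add_card_filter_not _
      · apply Finset.filter_congr
        intro v hv
        have := hne v hv
        constructor
        · intro h; exact not_lt.mpr (le_of_lt h)
        · intro h; exact lt_of_le_of_ne (not_lt.mp h) (Ne.symm this)
    have hAcard : A.card = K - 1 - B.card := by
      rw [hAeq]; omega
    have hrlt : 1 + A.card < K := by omega
    rw [if_pos hrlt, if_pos (by positivity)]
    have hcast : (((1 + A.card : ℕ) : ℝ) + 1) =
        ((K : ℝ) - 1) * (1 - (B.card : ℝ) / ((K : ℝ) - 1)) + 2 := by
      have h1 : (A.card : ℝ) = (K : ℝ) - 1 - B.card := by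
        rw [hAcard]
        have : B.card ≤ K - 1 := hmle
        push_cast [Nat.cast_sub this, Nat.cast_sub (le_of_lt hK1)]
        ring
      field_simp
      push_cast [h1]
      ring
    rw [hcast]
  · -- B empty: rank ≥ K
    have hB0 : B.card = 0 := by
      simp [Finset.not_nonempty_iff_eq_empty.mp hm]
    have hTsub : T ⊆ A := by
      intro v hv
      simp only [hA, Finset.mem_filter, Finset.mem_univ, true_and]
      refine ⟨hTneg v hv, ?_⟩
      have hnot : ¬ s v < s istar := by
        intro h
        exact hm ⟨v, Finset.mem_filter.mpr ⟨hv, h⟩⟩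
      exact lt_of_le_of_ne (not_lt.mp hnot) (Ne.symm (hne v hv))
    have : K - 1 ≤ A.card := hTcard ▸ Finset.card_le_card hTsub
    have hrge : ¬ (1 + A.card < K) := by omega
    rw [if_neg hrge, hB0]
    norm_num
end
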